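/- For a rooted binary phylogenetic network N on X with inheritance probabilities, the Net Fair Proportion Index is efficient: Σ_{a∈X} NFP(a) equals the total sum of edge lengths of N. -/

import Mathlib

open Finset
open scoped Classical

/-- `IsPath E u v p` : `p` is a list of consecutive edges of `E` leading from `u` to `v`. -/
def IsPath {V : Type*} (E : Finset (V × V)) : V → V → List (V × V) → Prop
  | u, v, [] => u = v
  | u, v, e :: p => e ∈ E ∧ e.1 = u ∧ IsPath E e.2 v p

/-- The vertex `u` lies on the path `p` starting at the vertex `a`. -/
def MemPath {V : Type*} (u a : V) (p : List (V × V)) : Prop :=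
  u = a ∨ ∃ e ∈ p, e.2 = u

/-- indegree of a vertex. -/
def inDeg {V : Type*} [DecidableEq V] (E : Finset (V × V)) (v : V) : ℕ :=
  (E.filter fun e => e.2 = v).card

/-- outdegree of a vertex. -/
def outDeg {V : Type*} [DecidableEq V] (E : Finset (V × V)) (v : V) : ℕ :=
  (E.filter fun e => e.1 = v).card

/-- All lists of length `n` with entries in `s`. -/
def listsOf {V : Type*} [DecidableEq V] (s : Finset (V × V)) : ℕ → Finset (List (V × V))
  | 0 => {[]}
  | n + 1 => s.biUnion fun e => (listsOf s n).image (e :: ·)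

/-- The (finite) set of all directed paths from `u` to `v` in an acyclic digraph. -/
noncomputable def allPaths {V : Type*} [Fintype V] [DecidableEq V]
    (E : Finset (V × V)) (u v : V) : Finset (List (V × V)) :=
  ((Finset.range (Fintype.card V + 1)).biUnion (listsOf E)).filter (IsPath E u v)

/-- A rooted binary phylogenetic network on the taxon set `X`, with vertex set `V`,
edge lengths and inheritance probabilities. -/
structure PhyloNetwork (V X : Type*) [Fintype V] [DecidableEq V] [Fintype X] where
  E : Finset (V × V)
  root : V
  len : V × V → ℝ
  prob : V × V → ℝ
  leafOf : X → V
  leafOf_inj : Function.Injective leafOf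
  root_in : inDeg E root = 0
  root_out : outDeg E root = 2
  leaf_iff : ∀ v, outDeg E v = 0 ↔ ∃ x, leafOf x = v
  leaf_in : ∀ x, inDeg E (leafOf x) = 1
  internal : ∀ v, v ≠ root → outDeg E v ≠ 0 →
      (inDeg E v = 1 ∧ outDeg E v = 2) ∨ (inDeg E v = 2 ∧ outDeg E v = 1)
  reach : ∀ v, ∃ p, IsPath E root v p
  acyclic : ∀ (v : V) (p : List (V × V)), p ≠ [] → ¬ IsPath E v v p
  len_nonneg : ∀ e ∈ E, 0 ≤ len e
  len_pos_tree : ∀ e ∈ E, inDeg E e.2 ≤ 1 → 0 < len e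
  len_retic : ∀ e ∈ E, inDeg E e.2 = 2 → len e = 0
  prob_tree : ∀ e ∈ E, inDeg E e.2 ≤ 1 → prob e = 1
  prob_pos : ∀ e ∈ E, 0 < prob e
  prob_lt_one : ∀ e ∈ E, inDeg E e.2 = 2 → prob e < 1
  prob_sum : ∀ v, inDeg E v = 2 → ∑ e ∈ E.filter (fun e => e.2 = v), prob e = 1

namespace PhyloNetwork

variable {V X : Type*} [Fintype V] [DecidableEq V] [Fintype X] [DecidableEq X]
variable (N : PhyloNetwork V X)

/-- Probability of a directed path: the product of the probabilities of its edges. -/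
noncomputable def pathProb (p : List (V × V)) : ℝ := (p.map N.prob).prod

/-- Total weight (sum of branch lengths) of a set of edges. -/
noncomputable def weight (A : Finset (V × V)) : ℝ := ∑ e ∈ A, N.len e

/-- A switching keeps exactly one incoming edge of every non-root vertex, i.e. it
deletes exactly one of the two incoming reticulation edges of each reticulation node
and keeps all tree edges. -/
def IsSwitching (F : Finset (V × V)) : Prop :=
  F ⊆ N.E ∧ ∀ v, v ≠ N.root → (F.filter fun e => e.2 = v).card = 1

/-- The switching yields a phylogenetic `X`-tree: every dead end is a labeled leaf. -/
def IsValidSwitching (F : Finset (V × V)) : Prop :=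
  N.IsSwitching F ∧ ∀ v, outDeg F v = 0 → ∃ x, N.leafOf x = v

/-- The (multi)set `T(N)` of phylogenetic `X`-trees displayed by `N`, each tree being
encoded by the switching producing it. -/
noncomputable def displayed : Finset (Finset (V × V)) :=
  N.E.powerset.filter N.IsValidSwitching

/-- The set of leaves lying below the edge `e` inside the subgraph `F`. -/
noncomputable def clusterIn (F : Finset (V × V)) (e : V × V) : Finset X :=
  Finset.univ.filter fun x => ∃ p, IsPath F e.2 (N.leafOf x) p

/-- Phylogenetic diversity of `S` in the tree displayed by the switching `F`
(the sum of the lengths of the edges of the minimal subtree spanning `S` and the root;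
suppression of degree-two vertices merges edge lengths additively, so it is computed
on the unsuppressed switching). -/
noncomputable def PDdisp (F : Finset (V × V)) (S : Finset X) : ℝ :=
  ∑ e ∈ F.filter (fun e => (N.clusterIn F e ∩ S).Nonempty), N.len e

/-- Unscaled probability of the tree displayed by the switching `F`: the product of the
inheritance probabilities of the kept reticulation edges. -/
noncomputable def Punsc (F : Finset (V × V)) : ℝ :=
  ∏ e ∈ F.filter (fun e => inDeg N.E e.2 = 2), N.prob e

/-- `v` is a vertex of the edge set `A`. -/
def vertexOf (A : Finset (V × V)) (v : V) : Prop := ∃ e ∈ A, e.1 = v ∨ e.2 = v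

/-- `A` is an arborescence rooted at the root of `N` inside `N`: there is exactly one
directed path from the root to each of its vertices. -/
def IsArbor (A : Finset (V × V)) : Prop :=
  A ⊆ N.E ∧ ∀ v, vertexOf A v → (allPaths A N.root v).card = 1

/-- `A` contains all taxa of `S`. -/
def spans (A : Finset (V × V)) (S : Finset X) : Prop :=
  ∀ x ∈ S, vertexOf A (N.leafOf x)

/-- Phylogenetic net diversity: the weight of a minimum cost arborescence containing
`S` and the root. -/
noncomputable def PND (S : Finset X) : ℝ :=
  sInf {w : ℝ | ∃ A, N.IsArbor A ∧ N.spans A S ∧ w = N.weight A}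

/-- Phylogenetic subnet diversity: the total weight of the subgraph of `N` consisting of
all edges lying on some directed path from the root to a leaf of `S`. -/
noncomputable def PSD (S : Finset X) : ℝ :=
  ∑ e ∈ N.E.filter (fun e => ∃ x ∈ S, ∃ p, IsPath N.E N.root (N.leafOf x) p ∧ e ∈ p), N.len e

/-- Probability that the leaf `d` is a descendant of the node `v`: the sum of the
probabilities of all directed paths from `v` to `d`. -/
noncomputable def Pdesc (v : V) (d : X) : ℝ :=
  ∑ p ∈ allPaths N.E v (N.leafOf d), N.pathProb p

/-- The set of leaves that are descendants of the edge `e`. -/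
noncomputable def De (e : V × V) : Finset X :=
  Finset.univ.filter fun x => ∃ p, IsPath N.E e.2 (N.leafOf x) p

/-- Net Fair Proportion Index of the taxon `a`. -/
noncomputable def NFP (a : X) : ℝ :=
  ∑ p ∈ allPaths N.E N.root (N.leafOf a),
    N.pathProb p * (p.map (fun e => N.len e / ∑ d ∈ N.De e, N.Pdesc e.2 d)).sum

end PhyloNetwork

/-- The original Shapley Value of a set function `f` (with `f ∅ = 0`). -/
noncomputable def shapley {X : Type*} [Fintype X] [DecidableEq X]
    (f : Finset X → ℝ) (a : X) : ℝ :=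
  (1 / (Nat.factorial (Fintype.card X) : ℝ)) *
    ∑ S ∈ Finset.univ.powerset.filter (fun S : Finset X => a ∈ S),
      ((S.card - 1).factorial : ℝ) * ((Fintype.card X - S.card).factorial : ℝ) *
        (f S - f (S.erase a))

/-!
Expand `NFP a` as a sum over pairs (path `p` from the root to `a`, edge `e` on `p`). Cutting `p`
at `e` into `q ++ e :: r`, the contribution of `e` summed over all taxa factors as
`S(e.1) · γ_e · (λ_e / T(e.2)) · ∑ a, P_desc(e.2, a)`, where `S v` is the total probability of the
paths from the root to `v` and `T v = ∑ a, P_desc(v, a)`. The last two factors cancel (`T v > 0`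
because every vertex reaches a leaf), and `S v = 1` by induction along the last edge of the
paths, since the inheritance probabilities into each non-root vertex sum to `1`. Finally
`γ_e λ_e = λ_e`: tree edges have probability `1` and reticulation edges length `0`.
-/

namespace List

variable {α : Type*} {l : List α} {k : ℕ}

lemma take_append_getElem_cons_drop (hk : k < l.length) :
    l.take k ++ l[k] :: l.drop (k + 1) = l := by
  rw [← drop_eq_getElem_cons hk, take_append_drop]

lemma prod_map_eq_take_mul_getElem_mul_drop {M : Type*} [CommMonoid M] {f : α → M}
    (hk : k < l.length) :
    (l.map f).prod = ((l.take k).map f).prod * f l[k] * ((l.drop (k + 1)).map f).prod := by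
  conv_lhs => rw [← take_append_getElem_cons_drop hk]
  simp only [map_append, map_cons, prod_append, prod_cons, mul_assoc]

end List

section Digraph

variable {V : Type*} {E : Finset (V × V)} {u v w : V} {p q : List (V × V)}

@[simp] lemma isPath_nil : IsPath E u v [] ↔ u = v := Iff.rfl

@[simp] lemma isPath_cons {e : V × V} :
    IsPath E u v (e :: p) ↔ e ∈ E ∧ e.1 = u ∧ IsPath E e.2 v p := Iff.rfl

lemma isPath_append : IsPath E u v (p ++ q) ↔ ∃ w, IsPath E u w p ∧ IsPath E w v q := by
  induction p generalizing u with
  | nil => simp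
  | cons e p ih => simp [ih, and_assoc]

lemma IsPath.mem_edges (h : IsPath E u v p) {e : V × V} (he : e ∈ p) : e ∈ E := by
  induction p generalizing u with
  | nil => simp at he
  | cons f p ih =>
    rcases List.mem_cons.1 he with rfl | he
    · exact h.1
    · exact ih h.2.2 he

lemma isPath_append_cons {e : V × V} :
    IsPath E u v (p ++ e :: q) ↔ IsPath E u e.1 p ∧ e ∈ E ∧ IsPath E e.2 v q := by
  simp [isPath_append]

lemma mem_listsOf [DecidableEq V] {n : ℕ} :
    p ∈ listsOf E n ↔ p.length = n ∧ ∀ e ∈ p, e ∈ E := by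
  induction n generalizing p with
  | zero => simp +contextual [listsOf, List.length_eq_zero_iff]
  | succ n ih => cases p <;> simp [listsOf, ih, and_comm, and_left_comm]

def Reaches (E : Finset (V × V)) (u v : V) : Prop := ∃ p, p ≠ [] ∧ IsPath E u v p

def IsAcyclic (E : Finset (V × V)) : Prop := ∀ v, ¬ Reaches E v v

lemma reaches_of_mem {e : V × V} (he : e ∈ E) : Reaches E e.1 e.2 :=
  ⟨[e], List.cons_ne_nil _ _, by simp [he]⟩

lemma Reaches.trans (huv : Reaches E u v) (hvw : Reaches E v w) : Reaches E u w := by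
  obtain ⟨p, hp, hpath⟩ := huv
  obtain ⟨q, -, hqpath⟩ := hvw
  exact ⟨p ++ q, by simp [hp], isPath_append.2 ⟨v, hpath, hqpath⟩⟩

instance : IsTrans V (Reaches E) := ⟨fun _ _ _ => Reaches.trans⟩

lemma IsPath.reaches_of_mem_snd (h : IsPath E u v p) (hw : w ∈ p.map Prod.snd) :
    Reaches E u w := by
  induction p generalizing u with
  | nil => simp at hw
  | cons e p ih =>
    have hu : Reaches E u e.2 := h.2.1 ▸ reaches_of_mem h.1
    rcases List.mem_cons.1 hw with rfl | hw
    · exact hu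
    · exact hu.trans (ih h.2.2 hw)

namespace IsAcyclic

variable (hE : IsAcyclic E)
include hE

lemma wellFounded [Finite V] : WellFounded (Reaches E) :=
  haveI : Std.Irrefl (Reaches E) := ⟨hE⟩
  Finite.wellFounded_of_trans_of_irrefl _

lemma wellFounded_swap [Finite V] : WellFounded (Function.swap (Reaches E)) :=
  haveI : Std.Irrefl (Function.swap (Reaches E)) := ⟨hE⟩
  Finite.wellFounded_of_trans_of_irrefl _

lemma eq_nil_of_isPath (h : IsPath E u u p) : p = [] := by
  by_contra hp
  exact hE u ⟨p, hp, h⟩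

lemma nodup_of_isPath (h : IsPath E u v p) : (u :: p.map Prod.snd).Nodup := by
  induction p generalizing u with
  | nil => simp
  | cons e p ih =>
    exact List.nodup_cons.2 ⟨fun hu => hE u (h.reaches_of_mem_snd hu), ih h.2.2⟩

variable [Fintype V] [DecidableEq V]

lemma mem_allPaths : p ∈ allPaths E u v ↔ IsPath E u v p := by
  refine ⟨fun h => (Finset.mem_filter.1 h).2, fun h => Finset.mem_filter.2 ⟨?_, h⟩⟩
  have hlen := (hE.nodup_of_isPath h).length_le_card
  simp only [List.length_cons, List.length_map] at hlen
  exact Finset.mem_biUnion.2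
    ⟨p.length, Finset.mem_range.2 (by omega), mem_listsOf.2 ⟨rfl, fun _ => h.mem_edges⟩⟩

lemma allPaths_self : allPaths E u u = {[]} := by
  ext p
  simpa [hE.mem_allPaths] using ⟨hE.eq_nil_of_isPath, fun h => h ▸ rfl⟩

lemma sum_allPaths_eq_sum_snoc {M : Type*} [AddCommMonoid M] (hvu : v ≠ u)
    (f : List (V × V) → M) :
    ∑ p ∈ allPaths E u v, f p
      = ∑ e ∈ E.filter (fun e => e.2 = v), ∑ q ∈ allPaths E u e.1, f (q ++ [e]) := by
  rw [Finset.sum_sigma']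
  symm
  refine Finset.sum_bij (fun x _ => x.2 ++ [x.1]) ?_ ?_ ?_ (fun _ _ => rfl)
  · rintro ⟨e, q⟩ hx
    simp only [Finset.mem_sigma, Finset.mem_filter, hE.mem_allPaths] at hx ⊢
    exact isPath_append.2 ⟨e.1, hx.2, by simp [hx.1.1, hx.1.2]⟩
  · rintro ⟨e, q⟩ - ⟨e', q'⟩ - h
    obtain ⟨rfl, h⟩ := List.append_inj' h rfl
    simp_all
  · intro p hp
    rw [hE.mem_allPaths] at hp
    obtain ⟨q, e, rfl⟩ :=
      (List.eq_nil_or_concat' p).resolve_left (by rintro rfl; exact hvu hp.symm)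
    obtain ⟨w, hq, he⟩ := isPath_append.1 hp
    simp only [isPath_cons, isPath_nil] at he
    exact ⟨⟨e, q⟩, by simp [hE.mem_allPaths, he.1, he.2.2, he.2.1, hq], rfl⟩

/-- A path `p` with a marked position `k` is the same as a triple `(q, p[k], r)` of two paths
and an edge with `p = q ++ p[k] :: r`. -/
lemma sum_allPaths_prod_mul_sum {R : Type*} [CommSemiring R] (pr g : V × V → R) :
    ∑ p ∈ allPaths E u w, (p.map pr).prod * (p.map g).sum
      = ∑ e ∈ E, (∑ q ∈ allPaths E u e.1, (q.map pr).prod) * pr e * g e *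
          ∑ r ∈ allPaths E e.2 w, (r.map pr).prod := by
  have hL : ∀ p : List (V × V), (p.map pr).prod * (p.map g).sum
      = ∑ k : Fin p.length, (p.map pr).prod * g p[k.1] := by
    intro p; rw [← Fin.sum_univ_fun_getElem, Finset.mul_sum]
  have hR : ∀ e : V × V, (∑ q ∈ allPaths E u e.1, (q.map pr).prod) * pr e * g e *
        ∑ r ∈ allPaths E e.2 w, (r.map pr).prod
      = ∑ x ∈ allPaths E u e.1 ×ˢ allPaths E e.2 w,
          (x.1.map pr).prod * pr e * g e * (x.2.map pr).prod := by
    intro e; rw [Finset.sum_product, Finset.sum_mul, Finset.sum_mul, Finset.sum_mul]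
    simp_rw [Finset.mul_sum]
  simp_rw [hL, hR]
  rw [Finset.sum_sigma', Finset.sum_sigma']
  refine Finset.sum_bij (fun x _ => ⟨x.1[x.2.1], x.1.take x.2, x.1.drop (x.2 + 1)⟩)
    ?_ ?_ ?_ ?_
  · rintro ⟨p, k⟩ hp
    simp only [Finset.mem_sigma, Finset.mem_univ, and_true, Finset.mem_product,
      hE.mem_allPaths] at hp ⊢
    rw [← List.take_append_getElem_cons_drop k.2, isPath_append_cons] at hp
    exact ⟨hp.2.1, hp.1, hp.2.2⟩
  · rintro ⟨p, k⟩ - ⟨p', k'⟩ - h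
    simp only [Sigma.mk.injEq, heq_iff_eq, Prod.mk.injEq] at h
    obtain ⟨he, hq, hr⟩ := h
    obtain rfl : p = p' := calc
      p = _ := (List.take_append_getElem_cons_drop k.2).symm
      _ = _ := by rw [he, hq, hr]
      _ = p' := List.take_append_getElem_cons_drop k'.2
    have hk : k = k' := Fin.ext (by simpa [k.2.le, k'.2.le] using congrArg List.length hq)
    rw [hk]
  · rintro ⟨e, q, r⟩ hx
    simp only [Finset.mem_sigma, Finset.mem_product, hE.mem_allPaths] at hx
    refine ⟨⟨q ++ e :: r, ⟨q.length, by simp⟩⟩, ?_, ?_⟩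
    · simpa [hE.mem_allPaths, isPath_append_cons] using ⟨hx.2.1, hx.1, hx.2.2⟩
    · simp
  · rintro ⟨p, k⟩ -
    rw [List.prod_map_eq_take_mul_getElem_mul_drop k.2]
    ring

end IsAcyclic

end Digraph

namespace PhyloNetwork

variable {V X : Type*} [Fintype V] [DecidableEq V] [Fintype X] (N : PhyloNetwork V X)

lemma isAcyclic : IsAcyclic N.E := fun v ⟨p, hp, h⟩ => N.acyclic v p hp h

lemma inDeg_eq_one_or_two {v : V} (hv : v ≠ N.root) : inDeg N.E v = 1 ∨ inDeg N.E v = 2 := by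
  by_cases ho : outDeg N.E v = 0
  · obtain ⟨x, rfl⟩ := (N.leaf_iff v).1 ho
    exact Or.inl (N.leaf_in x)
  · exact (N.internal v hv ho).imp And.left And.left

lemma snd_ne_root {e : V × V} (he : e ∈ N.E) : e.2 ≠ N.root := by
  intro h
  have := N.root_in
  rw [inDeg, Finset.card_eq_zero] at this
  exact Finset.notMem_empty e (this ▸ Finset.mem_filter.2 ⟨he, h⟩)

lemma sum_prob_inEdges {v : V} (hv : v ≠ N.root) :
    ∑ e ∈ N.E.filter (fun e => e.2 = v), N.prob e = 1 := by
  rcases N.inDeg_eq_one_or_two hv with h | h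
  · obtain ⟨e, he⟩ := Finset.card_eq_one.1 h
    have heE : e ∈ N.E ∧ e.2 = v := Finset.mem_filter.1 (he ▸ Finset.mem_singleton_self e)
    rw [he, Finset.sum_singleton]
    exact N.prob_tree e heE.1 (by rw [heE.2, h])
  · exact N.prob_sum v h

lemma prob_mul_len {e : V × V} (he : e ∈ N.E) : N.prob e * N.len e = N.len e := by
  rcases N.inDeg_eq_one_or_two (N.snd_ne_root he) with h | h
  · rw [N.prob_tree e he h.le, one_mul]
  · rw [N.len_retic e he h, mul_zero]

lemma exists_isPath_leaf (v : V) : ∃ x p, IsPath N.E v (N.leafOf x) p := by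
  induction v using N.isAcyclic.wellFounded_swap.induction with
  | _ v ih =>
    by_cases ho : outDeg N.E v = 0
    · obtain ⟨x, hx⟩ := (N.leaf_iff v).1 ho
      exact ⟨x, [], hx.symm⟩
    · obtain ⟨e, he⟩ := Finset.card_pos.1 (Nat.pos_of_ne_zero ho)
      obtain ⟨heE, rfl⟩ := Finset.mem_filter.1 he
      obtain ⟨x, p, hp⟩ := ih e.2 (reaches_of_mem heE)
      exact ⟨x, e :: p, heE, rfl, hp⟩

lemma pathProb_pos {u v : V} {p : List (V × V)} (hp : IsPath N.E u v p) : 0 < N.pathProb p :=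
  List.prod_pos fun _ ha => by
    obtain ⟨e, he, rfl⟩ := List.mem_map.1 ha
    exact N.prob_pos e (hp.mem_edges he)

lemma Pdesc_nonneg (v : V) (d : X) : 0 ≤ N.Pdesc v d :=
  Finset.sum_nonneg fun _ hp => (N.pathProb_pos (N.isAcyclic.mem_allPaths.1 hp)).le

lemma sum_Pdesc_pos (v : V) : 0 < ∑ d, N.Pdesc v d := by
  obtain ⟨x, p, hp⟩ := N.exists_isPath_leaf v
  have hx : 0 < N.Pdesc v x := Finset.sum_pos'
    (fun _ hq => (N.pathProb_pos (N.isAcyclic.mem_allPaths.1 hq)).le)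
    ⟨p, N.isAcyclic.mem_allPaths.2 hp, N.pathProb_pos hp⟩
  exact Finset.sum_pos' (fun d _ => N.Pdesc_nonneg v d) ⟨x, Finset.mem_univ x, hx⟩

lemma sum_De_Pdesc (e : V × V) : ∑ d ∈ N.De e, N.Pdesc e.2 d = ∑ d, N.Pdesc e.2 d := by
  refine Finset.sum_subset (Finset.subset_univ _) fun d _ hd => ?_
  refine Finset.sum_eq_zero fun p hp => absurd ?_ hd
  exact Finset.mem_filter.2 ⟨Finset.mem_univ d, p, N.isAcyclic.mem_allPaths.1 hp⟩

lemma sum_pathProb_allPaths_root (v : V) : ∑ p ∈ allPaths N.E N.root v, N.pathProb p = 1 := by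
  induction v using N.isAcyclic.wellFounded.induction with
  | _ v ih =>
    by_cases hv : v = N.root
    · simp [hv, N.isAcyclic.allPaths_self, pathProb]
    rw [N.isAcyclic.sum_allPaths_eq_sum_snoc hv, ← N.sum_prob_inEdges hv]
    refine Finset.sum_congr rfl fun e he => ?_
    obtain ⟨heE, rfl⟩ := Finset.mem_filter.1 he
    have hsnoc (q : List (V × V)) : N.pathProb (q ++ [e]) = N.pathProb q * N.prob e := by
      simp [pathProb]
    simp only [hsnoc, ← Finset.sum_mul, ih e.1 (reaches_of_mem heE), one_mul]

end PhyloNetwork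

theorem NFP_efficient_general {V X : Type*} [Fintype V] [DecidableEq V] [Fintype X] (N : PhyloNetwork V X) :
    ∑ a : X, N.NFP a = ∑ e ∈ N.E, N.len e := by
  set T : V → ℝ := fun v => ∑ d, N.Pdesc v d
  calc ∑ a : X, N.NFP a
      = ∑ a : X, ∑ e ∈ N.E, (∑ q ∈ allPaths N.E N.root e.1, N.pathProb q) * N.prob e
          * (N.len e / T e.2) * N.Pdesc e.2 a := by
        refine Finset.sum_congr rfl fun a _ => ?_
        simp only [PhyloNetwork.NFP, N.sum_De_Pdesc]
        exact N.isAcyclic.sum_allPaths_prod_mul_sum _ _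
    _ = ∑ e ∈ N.E, (∑ q ∈ allPaths N.E N.root e.1, N.pathProb q) * N.prob e
          * (N.len e / T e.2) * T e.2 := by
        rw [Finset.sum_comm]
        simp only [← Finset.mul_sum]
        rfl
    _ = ∑ e ∈ N.E, N.len e := by
        refine Finset.sum_congr rfl fun e he => ?_
        rw [N.sum_pathProb_allPaths_root, one_mul, mul_assoc,
          div_mul_cancel₀ _ (N.sum_Pdesc_pos e.2).ne', N.prob_mul_len he]

/-- the Net Fair Proportion Index is efficient: the indices of all taxa
sum to the total edge length of the network. -/
theorem NFP_efficient {V X : Type*} [Fintype V] [DecidableEq V] [Fintype X] [DecidableEq X] (N : PhyloNetwork V X) :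
    ∑ a : X, N.NFP a = ∑ e ∈ N.E, N.len e :=
  NFP_efficient_general N
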